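/- arXiv:1807.02879 — 3 statements merged into one kernel-verified Lean document; each statement's English description precedes it below -/
import Mathlib

section
/- Semantic reformulation of global compatibility: let T be a TBox, let B be a concept with finite rank rf(B)=k in the rational closure construction, and let H be any set of typicality inclusions of T. Then E_k ∪ H ⊨_{ALC+T_R} T(⊤) ⊑ ¬B if and only if E_k ⊨_{ALC+T_R} T(⊤) ⊓ H̃ ⊑ ¬B, where H̃ = ⊓{¬C⊔D : T(C)⊑D ∈ H} is the materialization of H. Consequently, for sets S, S' of defeasible inclusions, S is globally compatible with B w.r.t. E_k ∪ S' (i.e., E_k ∪ S ∪ S' ⊭_{ALC+T_R} T(⊤) ⊑ ¬B) if and only if E_k ⊭_{ALC+T_R} T(⊤) ⊓ S̃ ⊓ S̃' ⊑ ¬B. -/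
namespace BPDL

/-- ALC concepts over natural-number concept names and role names. -/
inductive Concept : Type where
  | name : ℕ → Concept
  | top : Concept
  | bot : Concept
  | neg : Concept → Concept
  | conj : Concept → Concept → Concept
  | disj : Concept → Concept → Concept
  | all : ℕ → Concept → Concept
  | ex : ℕ → Concept → Concept

/-- Extended concepts: ALC concepts, plus T(C) for an ALC concept C. -/
inductive ExtConcept : Type where
  | alc : Concept → ExtConcept
  | typ : Concept → ExtConcept

/-- TBox inclusions: strict C ⊑ D, or typicality T(C) ⊑ D. -/
inductive Inclusion : Type where
  | strict : Concept → Concept → Inclusion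
  | typ : Concept → Concept → Inclusion

/-- ABox assertions: C(a) or R(a,b). -/
inductive Assertion : Type where
  | conc : Concept → ℕ → Assertion
  | role : ℕ → ℕ → ℕ → Assertion

/-- Queries: C_L ⊑ C_R, C_L(a), or R(a,b), with C_L possibly of the form T(C). -/
inductive Query : Type where
  | incl : ExtConcept → Concept → Query
  | assertC : ExtConcept → ℕ → Query
  | assertR : ℕ → ℕ → ℕ → Query

/-- A knowledge base: a TBox and an ABox. -/
structure KB where
  tbox : Set Inclusion
  abox : Set Assertion

/-- min_r(A): the r-minimal elements of A. -/
def minSet {Δ : Type*} (r : Δ → Δ → Prop) (A : Set Δ) : Set Δ :=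
  {x | x ∈ A ∧ ¬ ∃ y ∈ A, r y x}

/-- Interpretation of concept, role and individual names on a domain Δ. -/
structure Valuation (Δ : Type*) where
  cname : ℕ → Set Δ
  rname : ℕ → Set (Δ × Δ)
  iname : ℕ → Δ

/-- Classical ALC interpretation of concepts. -/
def Valuation.interp {Δ : Type*} (V : Valuation Δ) : Concept → Set Δ
  | .name n => V.cname n
  | .top => Set.univ
  | .bot => ∅
  | .neg C => (V.interp C)ᶜ
  | .conj C D => V.interp C ∩ V.interp D
  | .disj C D => V.interp C ∪ V.interp D
  | .all R C => {x | ∀ y, (x, y) ∈ V.rname R → y ∈ V.interp C}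
  | .ex R C => {x | ∃ y, (x, y) ∈ V.rname R ∧ y ∈ V.interp C}

/-- ALC+T_R interpretation: irreflexive, transitive, modular, well-founded
preference relation plus a valuation; (T(C))^I = min_<(C^I). -/
structure Interp (Δ : Type) where
  lt : Δ → Δ → Prop
  lt_irrefl : ∀ x, ¬ lt x x
  lt_trans : ∀ {x y z}, lt x y → lt y z → lt x z
  lt_modular : ∀ x y z, lt x y → lt x z ∨ lt z y
  lt_wf : WellFounded lt
  V : Valuation Δ

def Interp.interpExt {Δ : Type} (M : Interp Δ) : ExtConcept → Set Δ
  | .alc C => M.V.interp C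
  | .typ C => minSet M.lt (M.V.interp C)

def Interp.satInc {Δ : Type} (M : Interp Δ) : Inclusion → Prop
  | .strict C D => M.V.interp C ⊆ M.V.interp D
  | .typ C D => minSet M.lt (M.V.interp C) ⊆ M.V.interp D

def Interp.satAssert {Δ : Type} (M : Interp Δ) : Assertion → Prop
  | .conc C a => M.V.iname a ∈ M.V.interp C
  | .role R a b => (M.V.iname a, M.V.iname b) ∈ M.V.rname R

def Interp.satQuery {Δ : Type} (M : Interp Δ) : Query → Prop
  | .incl Cl D => M.interpExt Cl ⊆ M.V.interp D
  | .assertC Cl a => M.V.iname a ∈ M.interpExt Cl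
  | .assertR R a b => (M.V.iname a, M.V.iname b) ∈ M.V.rname R

def Interp.satKB {Δ : Type} (M : Interp Δ) (K : KB) : Prop :=
  (∀ F ∈ K.tbox, M.satInc F) ∧ ∀ A ∈ K.abox, M.satAssert A

/-- Entailment of an inclusion from a set of inclusions in ALC+T_R. -/
def entails (E : Set Inclusion) (F : Inclusion) : Prop :=
  ∀ (Δ : Type) (M : Interp Δ), (∀ G ∈ E, M.satInc G) → M.satInc F

/-- Entailment of a query from a knowledge base in ALC+T_R. -/
def kbEntails (K : KB) (Q : Query) : Prop :=
  ∀ (Δ : Type) (M : Interp Δ), M.satKB K → M.satQuery Q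

/-! ### Rational closure -/

/-- C is exceptional for E iff E ⊨ T(⊤) ⊑ ¬C. -/
def exceptional (E : Set Inclusion) (C : Concept) : Prop :=
  entails E (Inclusion.typ Concept.top (Concept.neg C))

def strictPart (T : Set Inclusion) : Set Inclusion :=
  {F | F ∈ T ∧ ∃ C D, F = Inclusion.strict C D}

/-- δ(T): the typicality inclusions of T. -/
def deltaT (T : Set Inclusion) : Set Inclusion :=
  {F | F ∈ T ∧ ∃ C D, F = Inclusion.typ C D}

/-- The sequence E_0 ⊇ E_1 ⊇ … of the rational closure construction. -/
def Eseq (T : Set Inclusion) : ℕ → Set Inclusion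
  | 0 => T
  | i+1 =>
      {F | F ∈ Eseq T i ∧ ∃ C D, F = Inclusion.typ C D ∧ exceptional (Eseq T i) C}
        ∪ strictPart T

/-- rf(C) = k: k is the least i such that C is not exceptional for E_i. -/
def rankIs (T : Set Inclusion) (C : Concept) (k : ℕ) : Prop :=
  ¬ exceptional (Eseq T k) C ∧ ∀ j < k, exceptional (Eseq T j) C

/-- rf(C) = ∞: C is exceptional for every E_i. -/
def infiniteRank (T : Set Inclusion) (C : Concept) : Prop :=
  ∀ i, exceptional (Eseq T i) C

/-! ### Heights (longest descending chains) and concept ranks in a model -/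

/-- There is a chain x_0 r x_1 r … r x_n = x of length n ending at x. -/
def chainTo {Δ : Type*} (r : Δ → Δ → Prop) (x : Δ) (n : ℕ) : Prop :=
  ∃ f : ℕ → Δ, f n = x ∧ ∀ i < n, r (f i) (f (i+1))

/-- The length of the longest r-descending chain ending at x. -/
noncomputable def height {Δ : Type*} (r : Δ → Δ → Prop) (x : Δ) : ℕ :=
  sSup {n | chainTo r x n}

/-- The rank of a concept in a model: least height of one of its instances. -/
noncomputable def crank {Δ : Type*} (r : Δ → Δ → Prop) (V : Valuation Δ) (C : Concept) : ℕ :=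
  sInf {n | ∃ x ∈ V.interp C, height r x = n}

/-! ### Minimal canonical models (rational closure semantics) -/

/-- M is preferred to M' (Definition 4): same interpretation of all ALC concepts,
pointwise smaller rank, strictly somewhere. -/
def preferredTo {Δ : Type} (M M' : Interp Δ) : Prop :=
  (∀ C : Concept, M.V.interp C = M'.V.interp C) ∧
  (∀ x, height M.lt x ≤ height M'.lt x) ∧
  ∃ y, height M.lt y < height M'.lt y

def consistentWith (K : KB) (L : List Concept) : Prop :=
  ∃ (Δ : Type) (M : Interp Δ), M.satKB K ∧ ∃ x : Δ, ∀ C ∈ L, x ∈ M.V.interp C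

/-- Canonical model: every finite set of concepts consistent with K is jointly
satisfied by some domain element. -/
def Interp.canonical {Δ : Type} (M : Interp Δ) (K : KB) : Prop :=
  ∀ L : List Concept, consistentWith K L → ∃ x : Δ, ∀ C ∈ L, x ∈ M.V.interp C

/-- Minimal canonical model of K (w.r.t. TBox). -/
def minimalCanonical {Δ : Type} (M : Interp Δ) (K : KB) : Prop :=
  M.satKB K ∧ M.canonical K ∧
  ∀ M' : Interp Δ, M'.satKB K → M'.canonical K → ¬ preferredTo M' M

/-! ### BP-interpretations and BP-models -/

/-- Bi-preference interpretation: <_rc modular and ranked, < a (not necessarily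
modular) irreflexive transitive well-founded refinement; (T(C))^I = min_<(C^I). -/
structure BPInterp (Δ : Type) where
  rc : Δ → Δ → Prop
  rc_irrefl : ∀ x, ¬ rc x x
  rc_trans : ∀ {x y z}, rc x y → rc y z → rc x z
  rc_modular : ∀ x y z, rc x y → rc x z ∨ rc z y
  rc_wf : WellFounded rc
  lt : Δ → Δ → Prop
  lt_irrefl : ∀ x, ¬ lt x x
  lt_trans : ∀ {x y z}, lt x y → lt y z → lt x z
  lt_wf : WellFounded lt
  V : Valuation Δ

/-- The ALC+T_R interpretation ⟨Δ, <_rc, I⟩ underlying a BP-interpretation. -/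
def BPInterp.reduct {Δ : Type} (M : BPInterp Δ) : Interp Δ where
  lt := M.rc
  lt_irrefl := M.rc_irrefl
  lt_trans := M.rc_trans
  lt_modular := M.rc_modular
  lt_wf := M.rc_wf
  V := M.V

/-- x violates T(C) ⊑ D iff x ∈ (C ⊓ ¬D)^I. -/
def violates {Δ : Type*} (V : Valuation Δ) (x : Δ) (C D : Concept) : Prop :=
  x ∈ V.interp C ∧ x ∉ V.interp D

/-- BP-model of K: conditions (1)–(4) of Definition 9. -/
def BPInterp.isBPModel {Δ : Type} (M : BPInterp Δ) (K : KB) : Prop :=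
  (∀ C D, Inclusion.strict C D ∈ K.tbox → M.V.interp C ⊆ M.V.interp D) ∧
  (∀ C D, Inclusion.typ C D ∈ K.tbox → minSet M.rc (M.V.interp C) ⊆ M.V.interp D) ∧
  (∀ x y : Δ,
    (∃ C D, Inclusion.typ C D ∈ K.tbox ∧ violates M.V y C D) →
    (∀ Cj Dj, Inclusion.typ Cj Dj ∈ K.tbox → violates M.V x Cj Dj →
        ¬ violates M.V y Cj Dj →
      ∃ Ck Dk, Inclusion.typ Ck Dk ∈ K.tbox ∧ violates M.V y Ck Dk ∧
        ¬ violates M.V x Ck Dk ∧ crank M.rc M.V Cj < crank M.rc M.V Ck) →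
    M.lt x y) ∧
  (∀ A ∈ K.abox, M.reduct.satAssert A)

def BPInterp.interpExt {Δ : Type} (M : BPInterp Δ) : ExtConcept → Set Δ
  | .alc C => M.V.interp C
  | .typ C => minSet M.lt (M.V.interp C)

def BPInterp.satQuery {Δ : Type} (M : BPInterp Δ) : Query → Prop
  | .incl Cl D => M.interpExt Cl ⊆ M.V.interp D
  | .assertC Cl a => M.V.iname a ∈ M.interpExt Cl
  | .assertR R a b => (M.V.iname a, M.V.iname b) ∈ M.V.rname R

/-- Min_RC(K): BP-models whose reduct is a minimal canonical ALC+T_R model of K. -/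
def inMinRC {Δ : Type} (M : BPInterp Δ) (K : KB) : Prop :=
  M.isBPModel K ∧ minimalCanonical M.reduct K

/-- M' ≺_BP M (Definition 10). -/
def bpPreferredTo {Δ : Type} (M' M : BPInterp Δ) : Prop :=
  M'.V = M.V ∧ (∀ x, height M'.lt x ≤ height M.lt x) ∧
  ∃ y, height M'.lt y < height M.lt y

/-- Minimal canonical BP-model of K. -/
def minCanonicalBP {Δ : Type} (M : BPInterp Δ) (K : KB) : Prop :=
  inMinRC M K ∧ ∀ M' : BPInterp Δ, inMinRC M' K → ¬ bpPreferredTo M' M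

/-- K ⊨_BP Q: Q holds in all BP-models of K. -/
def bpEntails (K : KB) (Q : Query) : Prop :=
  ∀ (Δ : Type) (M : BPInterp Δ), M.isBPModel K → M.satQuery Q

/-- K ⊨_BP^min Q: Q holds in all minimal canonical BP-models of K. -/
def bpMinEntails (K : KB) (Q : Query) : Prop :=
  ∀ (Δ : Type) (M : BPInterp Δ), minCanonicalBP M K → M.satQuery Q

/-! ### The MP-closure -/

/-- D_i: the typicality inclusions of T with rank exactly i. -/
def Drank (T : Set Inclusion) (i : ℕ) : Set Inclusion :=
  {F | ∃ C D, F = Inclusion.typ C D ∧ F ∈ T ∧ rankIs T C i}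

/-- The subset-based seriousness ordering: S' ≺ S. -/
def serPrec (T : Set Inclusion) (S' S : Set Inclusion) : Prop :=
  ∃ h : ℕ, S ∩ Drank T h ⊂ S' ∩ Drank T h ∧
    ∀ j, h < j → S' ∩ Drank T j = S ∩ Drank T j

/-- x satisfies the materialization S̃ = ⊓{¬C⊔D : T(C)⊑D ∈ S}. -/
def matSat {Δ : Type*} (V : Valuation Δ) (S : Set Inclusion) (x : Δ) : Prop :=
  ∀ C D, Inclusion.typ C D ∈ S → x ∈ V.interp (Concept.disj (Concept.neg C) D)

/-- E ⊨ T(⊤) ⊓ S̃ ⊑ G. -/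
def entailsTopMat (E S : Set Inclusion) (G : Concept) : Prop :=
  ∀ (Δ : Type) (M : Interp Δ), (∀ F ∈ E, M.satInc F) →
    ∀ x ∈ minSet M.lt (Set.univ : Set Δ), matSat M.V S x → x ∈ M.V.interp G

/-- S ∪ E_k is a maximal set of defeasible inclusions compatible with B. -/
def maximalCompatible (T : Set Inclusion) (k : ℕ) (B : Concept) (S : Set Inclusion) : Prop :=
  S ⊆ deltaT T ∧ ¬ entailsTopMat (Eseq T k) S (Concept.neg B) ∧
  ∀ S', S' ⊆ deltaT T → serPrec T S' S → entailsTopMat (Eseq T k) S' (Concept.neg B)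

/-- T(B) ⊑ D follows from the MP-closure of T. -/
def followsMP (T : Set Inclusion) (B D : Concept) : Prop :=
  infiniteRank T B ∨ ∃ k, rankIs T B k ∧
    ∀ S, maximalCompatible T k B S →
      entailsTopMat (Eseq T k) S (Concept.disj (Concept.neg B) D)

/-! ### The skeptical closure -/

/-- The typicality inclusion F has rank i. -/
def inclRankIs (T : Set Inclusion) (F : Inclusion) (i : ℕ) : Prop :=
  ∃ C D, F = Inclusion.typ C D ∧ rankIs T C i

/-- skAcc T B k m = E_k ∪ S^B_{k-1} ∪ … ∪ S^B_{k-m}: each S^B_i consists of the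
rank-i typicality inclusions of T individually compatible with B w.r.t. the
previously accumulated set. -/
def skAcc (T : Set Inclusion) (B : Concept) (k : ℕ) : ℕ → Set Inclusion
  | 0 => Eseq T k
  | m+1 => skAcc T B k m ∪
      {F | F ∈ T ∧ inclRankIs T F (k - 1 - m) ∧
        ¬ entails (skAcc T B k m ∪ {F}) (Inclusion.typ Concept.top (Concept.neg B))}

/-- j is a good stopping point: each S^B_i with j ≤ i < k is globally compatible
with B w.r.t. the previously accumulated inclusions. -/
def goodJ (T : Set Inclusion) (B : Concept) (k : ℕ) (j : ℕ) : Prop :=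
  j < k ∧ ∀ i, j ≤ i → i < k →
    ¬ entails (skAcc T B k (k - i)) (Inclusion.typ Concept.top (Concept.neg B))

open Classical in
/-- S^{sk,B}: the skeptical closure of T w.r.t. B (with rf(B) = k finite). -/
noncomputable def skClosureSet (T : Set Inclusion) (B : Concept) (k : ℕ) : Set Inclusion :=
  if ∃ j, goodJ T B k j then skAcc T B k (k - sInf {j | goodJ T B k j})
  else Eseq T k

/-- T(B) ⊑ D is in the skeptical closure of T. -/
def inSkClosure (T : Set Inclusion) (B D : Concept) : Prop :=
  infiniteRank T B ∨ ∃ k, rankIs T B k ∧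
    entails (skClosureSet T B k)
      (Inclusion.typ Concept.top (Concept.disj (Concept.neg B) D))

end BPDL

namespace BPDL

/-!
If `E_k ⊨ T(⊤) ⊓ H̃ ⊑ ¬B` fails, a model `M` of `E_k` has a minimal element `x` satisfying `H̃`
and `B`. Every inclusion `T(C) ⊑ D` of `H` that is not in `E_k` left the rational closure
sequence at some level `i < k` because `C` was not exceptional for `E_i`, so some model of
`E_i` realizes `C`. Stacking these witness models in layers `i + 1` between the minimal
`H̃`-elements of `M` (layer `0`) and the rest of `M` (layer `k + 1`), and ordering each layer by
ordinal rank, gives a ranked model of `E_k ∪ H` in which `x` is still typical.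
-/

lemma mem_minSet_of_mem_minSet_univ {Δ : Type*} {r : Δ → Δ → Prop} {A : Set Δ} {x : Δ}
    (hx : x ∈ minSet r Set.univ) (hA : x ∈ A) : x ∈ minSet r A :=
  ⟨hA, fun ⟨y, _, hyx⟩ => hx.2 ⟨y, trivial, hyx⟩⟩

lemma mem_minSet_preimage {α β : Type*} {r : α → α → Prop} {s : β → β → Prop} {f : α → β}
    (hf : ∀ x y, r x y → s (f x) (f y)) {B : Set β} {x : α} (hx : f x ∈ minSet s B) :
    x ∈ minSet r (f ⁻¹' B) :=
  ⟨hx.1, fun ⟨y, hy, hyx⟩ => hx.2 ⟨f y, hy, hf y x hyx⟩⟩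

lemma matSat_union {Δ : Type*} (V : Valuation Δ) (S S' : Set Inclusion) (x : Δ) :
    matSat V (S ∪ S') x ↔ matSat V S x ∧ matSat V S' x :=
  ⟨fun h => ⟨fun C D hCD => h C D (Or.inl hCD), fun C D hCD => h C D (Or.inr hCD)⟩,
    fun ⟨h, h'⟩ C D hCD => hCD.elim (h C D) (h' C D)⟩

lemma entails_union_of_entailsTopMat {E H : Set Inclusion} {G : Concept}
    (h : entailsTopMat E H G) : entails (E ∪ H) (Inclusion.typ Concept.top G) := by
  intro Δ M hM x hx
  refine h Δ M (fun F hF => hM F (Or.inl hF)) x hx fun C D hCD => ?_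
  by_cases hC : x ∈ M.V.interp C
  · exact Or.inr (hM _ (Or.inr hCD) (mem_minSet_of_mem_minSet_univ hx hC))
  · exact Or.inl hC

lemma exists_mem_interp_of_not_exceptional {E : Set Inclusion} {C : Concept}
    (h : ¬ exceptional E C) :
    ∃ (Δ : Type) (M : Interp Δ), (∀ G ∈ E, M.satInc G) ∧ ∃ x, x ∈ M.V.interp C := by
  simp only [exceptional, entails, not_forall] at h
  obtain ⟨Δ, M, hM, hC⟩ := h
  obtain ⟨x, -, hx⟩ := Set.not_subset.1 hC
  exact ⟨Δ, M, hM, x, not_not.1 hx⟩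

lemma strictPart_subset_Eseq (T : Set Inclusion) : ∀ i, strictPart T ⊆ Eseq T i
  | 0 => fun _ hF => hF.1
  | _ + 1 => fun _ hF => Or.inr hF

lemma Eseq_antitone (T : Set Inclusion) : Antitone (Eseq T) :=
  antitone_nat_of_succ_le fun i _ hF => hF.elim (·.1) (strictPart_subset_Eseq T i ·)

lemma typ_mem_Eseq_succ_iff {T : Set Inclusion} {C D : Concept} {i : ℕ} :
    Inclusion.typ C D ∈ Eseq T (i + 1) ↔
      Inclusion.typ C D ∈ Eseq T i ∧ exceptional (Eseq T i) C := by
  constructor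
  · rintro (⟨hi, C', D', hCD, hexc⟩ | ⟨-, C', D', hCD⟩)
    · cases hCD
      exact ⟨hi, hexc⟩
    · cases hCD
  · exact fun ⟨hi, hexc⟩ => Or.inl ⟨hi, C, D, rfl, hexc⟩

lemma exists_lt_not_exceptional {T : Set Inclusion} {C D : Concept} (hT : Inclusion.typ C D ∈ T) :
    ∀ {k}, Inclusion.typ C D ∉ Eseq T k →
      ∃ i < k, Inclusion.typ C D ∈ Eseq T i ∧ ¬ exceptional (Eseq T i) C
  | 0, hk => absurd hT hk
  | k + 1, hk => by
    by_cases hmem : Inclusion.typ C D ∈ Eseq T k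
    · exact ⟨k, k.lt_succ_self, hmem, fun hexc => hk (typ_mem_Eseq_succ_iff.2 ⟨hmem, hexc⟩)⟩
    · obtain ⟨i, hik, hi⟩ := exists_lt_not_exceptional hT hmem
      exact ⟨i, hik.trans k.lt_succ_self, hi⟩

structure DropWitness (T : Set Inclusion) (k : ℕ) (C D : Concept) where
  level : ℕ
  level_lt : level < k
  mem_Eseq : Inclusion.typ C D ∈ Eseq T level
  Dom : Type
  model : Interp Dom
  sat : ∀ G ∈ Eseq T level, model.satInc G
  elem : Dom
  elem_mem : elem ∈ model.V.interp C

lemma DropWitness.nonempty {T : Set Inclusion} {k : ℕ} {C D : Concept}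
    (hT : Inclusion.typ C D ∈ T) (hk : Inclusion.typ C D ∉ Eseq T k) :
    Nonempty (DropWitness T k C D) := by
  obtain ⟨i, hik, hi, hexc⟩ := exists_lt_not_exceptional hT hk
  obtain ⟨Δ, M, hM, x, hx⟩ := exists_mem_interp_of_not_exceptional hexc
  exact ⟨⟨i, hik, hi, Δ, M, hM, x, hx⟩⟩

section LayeredSum

variable {ι : Type} {Δ : ι → Type}

def Valuation.sigma (V : ∀ i, Valuation (Δ i)) (i₀ : ι) : Valuation (Σ i, Δ i) where
  cname n := {d | d.2 ∈ (V d.1).cname n}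
  rname R := {p | ∃ i x y, p = (⟨i, x⟩, ⟨i, y⟩) ∧ (x, y) ∈ (V i).rname R}
  iname n := ⟨i₀, (V i₀).iname n⟩

lemma Valuation.mem_interp_sigma (V : ∀ i, Valuation (Δ i)) (i₀ : ι) (C : Concept) {i : ι}
    {x : Δ i} : (⟨i, x⟩ : Σ i, Δ i) ∈ (Valuation.sigma V i₀).interp C ↔ x ∈ (V i).interp C := by
  induction C generalizing i with
  | name n => rfl
  | top | bot => rfl
  | neg C ih => exact not_congr ih
  | conj C D ihC ihD => exact and_congr ihC ihD
  | disj C D ihC ihD => exact or_congr ihC ihD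
  | all R C ih =>
    constructor
    · exact fun h y hxy => ih.1 (h ⟨i, y⟩ ⟨i, x, y, rfl, hxy⟩)
    · rintro h _ ⟨j, x', y, hxy, hR⟩
      cases hxy
      exact ih.2 (h y hR)
  | ex R C ih =>
    constructor
    · rintro ⟨_, ⟨j, x', y, hxy, hR⟩, hy⟩
      cases hxy
      exact ⟨y, hR, ih.1 hy⟩
    · exact fun ⟨y, hxy, hy⟩ => ⟨⟨i, y⟩, ⟨i, x, y, rfl, hxy⟩, ih.2 hy⟩

def Interp.ofKey {D : Type} {β : Type*} [LinearOrder β] [WellFoundedLT β] (key : D → β)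
    (V : Valuation D) : Interp D where
  lt x y := key x < key y
  lt_irrefl _ := _root_.lt_irrefl _
  lt_trans := _root_.lt_trans
  lt_modular _ _ z h := (lt_or_ge _ (key z)).imp_right (lt_of_le_of_lt · h)
  lt_wf := InvImage.wf key wellFounded_lt
  V := V

variable (M : ∀ i, Interp (Δ i)) (band : ∀ i, Δ i → ℕ) (i₀ : ι)

noncomputable def Interp.layeredSum : Interp (Σ i, Δ i) :=
  Interp.ofKey (fun d => toLex (band d.1 d.2, ((M d.1).lt_wf.apply d.2).rank))
    (Valuation.sigma (fun i => (M i).V) i₀)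

variable {M band i₀}

lemma Interp.mem_interp_layeredSum {C : Concept} {i : ι} {x : Δ i} :
    (⟨i, x⟩ : Σ i, Δ i) ∈ (Interp.layeredSum M band i₀).V.interp C ↔ x ∈ (M i).V.interp C :=
  Valuation.mem_interp_sigma (fun i => (M i).V) i₀ C

lemma Interp.layeredSum_lt_iff {i j : ι} {x : Δ i} {y : Δ j} :
    (Interp.layeredSum M band i₀).lt ⟨i, x⟩ ⟨j, y⟩ ↔ band i x < band j y ∨
      band i x = band j y ∧ ((M i).lt_wf.apply x).rank < ((M j).lt_wf.apply y).rank :=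
  Prod.Lex.toLex_lt_toLex

lemma Interp.mem_minSet_of_mem_minSet_layeredSum
    (hband : ∀ i x y, (M i).lt x y → band i x ≤ band i y) {C : Concept} {i : ι} {x : Δ i}
    (h : ⟨i, x⟩ ∈ minSet (Interp.layeredSum M band i₀).lt
      ((Interp.layeredSum M band i₀).V.interp C)) :
    x ∈ minSet (M i).lt ((M i).V.interp C) := by
  have hpre : Sigma.mk i ⁻¹' (Interp.layeredSum M band i₀).V.interp C = (M i).V.interp C :=
    Set.ext fun _ => Interp.mem_interp_layeredSum
  rw [← hpre]
  refine mem_minSet_preimage (fun y z hyz => ?_) h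
  exact Interp.layeredSum_lt_iff.2 <| (hband i y z hyz).lt_or_eq.imp_right
    fun heq => ⟨heq, Acc.rank_lt_of_rel _ hyz⟩

lemma Interp.band_le_of_mem_minSet_layeredSum {C : Concept} {i j : ι} {x : Δ i} {y : Δ j}
    (h : ⟨i, x⟩ ∈ minSet (Interp.layeredSum M band i₀).lt
      ((Interp.layeredSum M band i₀).V.interp C))
    (hy : y ∈ (M j).V.interp C) : band i x ≤ band j y :=
  not_lt.1 fun hlt => h.2 ⟨⟨j, y⟩, Interp.mem_interp_layeredSum.2 hy,
    Interp.layeredSum_lt_iff.2 (Or.inl hlt)⟩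

lemma Interp.mem_minSet_univ_layeredSum {i : ι} {x : Δ i} (hband : band i x = 0)
    (hx : x ∈ minSet (M i).lt Set.univ) :
    ⟨i, x⟩ ∈ minSet (Interp.layeredSum M band i₀).lt Set.univ := by
  refine ⟨trivial, ?_⟩
  have hrank : ((M i).lt_wf.apply x).rank = 0 := by
    have : IsEmpty {y // (M i).lt y x} := ⟨fun y => hx.2 ⟨y, trivial, y.2⟩⟩
    rw [Acc.rank_eq, ciSup_of_empty, bot_eq_zero]
  rintro ⟨⟨j, y⟩, -, hlt⟩
  rw [Interp.layeredSum_lt_iff, hband, hrank] at hlt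
  simp at hlt

end LayeredSum

section Amalgam

variable {T H : Set Inclusion} {k : ℕ} {Δ : Type} (M : Interp Δ)

def Dropped (T H : Set Inclusion) (k : ℕ) : Type :=
  {p : Concept × Concept // Inclusion.typ p.1 p.2 ∈ H ∧ Inclusion.typ p.1 p.2 ∉ Eseq T k}

variable (W : ∀ p : Dropped T H k, DropWitness T k p.1.1 p.1.2)

def amalgamDom : Option (Dropped T H k) → Type
  | none => Δ
  | some p => (W p).Dom

def amalgamModel : ∀ o, Interp (amalgamDom (Δ := Δ) W o)
  | none => M
  | some p => (W p).model

open Classical in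
noncomputable def amalgamBand : ∀ o, amalgamDom (Δ := Δ) W o → ℕ
  | none, a => if a ∈ minSet M.lt Set.univ ∧ matSat M.V H a then 0 else k + 1
  | some p, _ => (W p).level + 1

noncomputable def amalgam : Interp (Σ o, amalgamDom (Δ := Δ) W o) :=
  Interp.layeredSum (amalgamModel M W) (amalgamBand M W) none

variable {M W}

lemma amalgamBand_mono {o : Option (Dropped T H k)} {x y : amalgamDom W o}
    (hxy : (amalgamModel M W o).lt x y) : amalgamBand M W o x ≤ amalgamBand M W o y := by
  cases o with
  | none =>
    have hy : ¬ (y ∈ minSet M.lt Set.univ ∧ matSat M.V H y) := fun hy => hy.1.2 ⟨x, trivial, hxy⟩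
    simp only [amalgamBand, if_neg hy]
    split_ifs <;> omega
  | some p => exact le_rfl

lemma amalgamModel_sat_Eseq (hM : ∀ G ∈ Eseq T k, M.satInc G) :
    ∀ o, ∀ G ∈ Eseq T k, (amalgamModel M W o).satInc G
  | none => hM
  | some p => fun G hG => (W p).sat G (Eseq_antitone T (W p).level_lt.le hG)

lemma amalgamModel_sat_of_band_eq_succ (hM : ∀ G ∈ Eseq T k, M.satInc G)
    {o : Option (Dropped T H k)} {x : amalgamDom W o} {b : ℕ}
    (hb : amalgamBand M W o x = b + 1) :
    b ≤ k ∧ ∀ G ∈ Eseq T b, (amalgamModel M W o).satInc G := by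
  cases o with
  | none =>
    have hbk : b = k := by
      simp only [amalgamBand] at hb
      split_ifs at hb; omega
    exact ⟨hbk.le, fun G hG => hM G (hbk ▸ hG)⟩
  | some p =>
    obtain rfl : (W p).level = b := Nat.succ_injective hb
    exact ⟨(W p).level_lt.le, (W p).sat⟩

lemma amalgam_satInc_strict (hM : ∀ G ∈ Eseq T k, M.satInc G) {C D : Concept}
    (hCD : Inclusion.strict C D ∈ Eseq T k) : (amalgam M W).satInc (Inclusion.strict C D) :=
  fun ⟨o, _⟩ hx => Interp.mem_interp_layeredSum.2 <|
    amalgamModel_sat_Eseq hM o _ hCD (Interp.mem_interp_layeredSum.1 hx)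

lemma amalgam_satInc_typ (hM : ∀ G ∈ Eseq T k, M.satInc G) {C D : Concept}
    (hCD : Inclusion.typ C D ∈ Eseq T k ∪ H) : (amalgam M W).satInc (Inclusion.typ C D) := by
  rintro ⟨o, x⟩ hx
  have hxC := Interp.mem_interp_layeredSum.1 hx.1
  refine Interp.mem_interp_layeredSum.2 ?_
  have hxmin := Interp.mem_minSet_of_mem_minSet_layeredSum (fun _ _ _ => amalgamBand_mono) hx
  rcases hband : amalgamBand M W o x with _ | b
  · cases o with
    | none =>
      have hZ : x ∈ minSet M.lt Set.univ ∧ matSat M.V H x := by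
        by_contra hZ
        simp [amalgamBand, hZ] at hband
      rcases hCD with hCD | hCD
      · exact hM _ hCD (mem_minSet_of_mem_minSet_univ hZ.1 hxC)
      · exact (hZ.2 C D hCD).resolve_left (not_not.2 hxC)
    | some p => simp [amalgamBand] at hband
  · obtain ⟨hbk, hsat⟩ := amalgamModel_sat_of_band_eq_succ hM hband
    refine hsat (Inclusion.typ C D) ?_ hxmin
    by_contra hb
    -- `T(C) ⊑ D` dropped below level `b`, so its witness sits in a lower layer than `x`
    have hk : Inclusion.typ C D ∉ Eseq T k := fun h => hb (Eseq_antitone T hbk h)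
    let p : Dropped T H k := ⟨(C, D), hCD.resolve_left hk, hk⟩
    have hle := Interp.band_le_of_mem_minSet_layeredSum (j := some p) (y := (W p).elem) hx
      (W p).elem_mem
    rw [hband] at hle
    exact hb (Eseq_antitone T (Nat.succ_le_succ_iff.1 hle) (W p).mem_Eseq)

end Amalgam

lemma entailsTopMat_of_entails_union {T H : Set Inclusion} {k : ℕ} {G : Concept}
    (hH : H ⊆ deltaT T) (h : entails (Eseq T k ∪ H) (Inclusion.typ Concept.top G)) :
    entailsTopMat (Eseq T k) H G := by
  intro Δ M hM x hx hxH
  have W : ∀ p : Dropped T H k, DropWitness T k p.1.1 p.1.2 :=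
    fun p => (DropWitness.nonempty (hH p.2.1).1 p.2.2).some
  have hsat : ∀ F ∈ Eseq T k ∪ H, (amalgam M W).satInc F := by
    rintro (⟨C, D⟩ | ⟨C, D⟩) hF
    · refine amalgam_satInc_strict hM (hF.resolve_right fun hF' => ?_)
      obtain ⟨-, _, _, hCD⟩ := hH hF'
      cases hCD
    · exact amalgam_satInc_typ hM hF
  have hband : amalgamBand M W none x = 0 := if_pos ⟨hx, hxH⟩
  exact Interp.mem_interp_layeredSum.1 (h _ _ hsat (Interp.mem_minSet_univ_layeredSum hband hx))

theorem global_compatibility_reformulation_general (T : Set Inclusion) (B : Concept)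
    (k : ℕ) :
    (∀ H : Set Inclusion, H ⊆ deltaT T →
      (entails (Eseq T k ∪ H) (Inclusion.typ Concept.top (Concept.neg B)) ↔
        entailsTopMat (Eseq T k) H (Concept.neg B))) ∧
    (∀ S S' : Set Inclusion, S ⊆ deltaT T → S' ⊆ deltaT T →
      (¬ entails (Eseq T k ∪ S ∪ S')
          (Inclusion.typ Concept.top (Concept.neg B)) ↔
        ¬ ∀ (Δ : Type) (M : Interp Δ), (∀ F ∈ Eseq T k, M.satInc F) →
            ∀ x ∈ minSet M.lt (Set.univ : Set Δ),
              matSat M.V S x → matSat M.V S' x →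
                x ∈ M.V.interp (Concept.neg B))) := by
  have reformulation : ∀ H ⊆ deltaT T,
      (entails (Eseq T k ∪ H) (Inclusion.typ Concept.top (Concept.neg B)) ↔
        entailsTopMat (Eseq T k) H (Concept.neg B)) :=
    fun _ hH => ⟨entailsTopMat_of_entails_union hH, entails_union_of_entailsTopMat⟩
  refine ⟨reformulation, fun S S' hS hS' => not_congr ?_⟩
  rw [Set.union_assoc, reformulation _ (Set.union_subset hS hS')]
  simp only [entailsTopMat, matSat_union, and_imp]

/-- Proposition 5 (semantic reformulation of global compatibility): for a set H
of typicality inclusions of T and B with finite rf(B)=k,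
E_k ∪ H ⊨ T(⊤) ⊑ ¬B iff E_k ⊨ T(⊤) ⊓ H̃ ⊑ ¬B; consequently S is globally
compatible with B w.r.t. E_k ∪ S' iff E_k ⊭ T(⊤) ⊓ S̃ ⊓ S̃' ⊑ ¬B. -/
theorem global_compatibility_reformulation (T : Set Inclusion) (B : Concept)
    (k : ℕ) (hk : rankIs T B k) :
    (∀ H : Set Inclusion, H ⊆ deltaT T →
      (entails (Eseq T k ∪ H) (Inclusion.typ Concept.top (Concept.neg B)) ↔
        entailsTopMat (Eseq T k) H (Concept.neg B))) ∧
    (∀ S S' : Set Inclusion, S ⊆ deltaT T → S' ⊆ deltaT T →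
      (¬ entails (Eseq T k ∪ S ∪ S')
          (Inclusion.typ Concept.top (Concept.neg B)) ↔
        ¬ ∀ (Δ : Type) (M : Interp Δ), (∀ F ∈ Eseq T k, M.satInc F) →
            ∀ x ∈ minSet M.lt (Set.univ : Set Δ),
              matSat M.V S x → matSat M.V S' x →
                x ∈ M.V.interp (Concept.neg B))) :=
  global_compatibility_reformulation_general T B k

end BPDL
end

section
/- Uniqueness of the maximal basis when all individually compatible defaults are jointly compatible: let T be a TBox and B a concept with finite rank rf(B)=k, and let S^B = {T(C)⊑D ∈ δ(T) : E_k ∪ {T(C)⊑D} ⊭_{ALC+T_R} T(⊤) ⊑ ¬B} be the set of typicality inclusions of T individually compatible with B w.r.t. E_k. If S^B is globally compatible with B, i.e., E_k ⊭_{ALC+T_R} T(⊤) ⊓ S̃^B ⊑ ¬B, then (i) every set S ⊆ δ(T) with E_k ⊭_{ALC+T_R} T(⊤) ⊓ S̃ ⊑ ¬B satisfies S ⊆ S^B, and (ii) S^B ∪ E_k is the unique maximal set of defeasible inclusions compatible with B in T with respect to the seriousness ordering ≺. -/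
namespace BPDL

/-- S^B: the typicality inclusions of T individually compatible with B
w.r.t. E_k. -/
def SBset (T : Set Inclusion) (B : Concept) (k : ℕ) : Set Inclusion :=
  {F | F ∈ deltaT T ∧
    ¬ entails (Eseq T k ∪ {F}) (Inclusion.typ Concept.top (Concept.neg B))}

namespace BPDLAux
open BPDL

variable {Δ1 Δ2 : Type}

/-- Disjoint-union valuation. -/
def sumVal (V1 : Valuation Δ1) (V2 : Valuation Δ2) : Valuation (Δ1 ⊕ Δ2) where
  cname n := {s | Sum.elim (· ∈ V1.cname n) (· ∈ V2.cname n) s}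
  rname n := {q | match q with
    | (Sum.inl a, Sum.inl b) => (a, b) ∈ V1.rname n
    | (Sum.inr a, Sum.inr b) => (a, b) ∈ V2.rname n
    | _ => False}
  iname n := Sum.inl (V1.iname n)

lemma sumVal_interp (V1 : Valuation Δ1) (V2 : Valuation Δ2) (G : Concept) :
    ∀ s, s ∈ (sumVal V1 V2).interp G ↔ Sum.elim (· ∈ V1.interp G) (· ∈ V2.interp G) s := by
  induction G with
  | name n => rintro (y | a) <;> simp [sumVal, Valuation.interp]
  | top => rintro (y | a) <;> simp [Valuation.interp]
  | bot => rintro (y | a) <;> simp [Valuation.interp]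
  | neg C ih => rintro (y | a) <;> simp [Valuation.interp, Set.mem_compl_iff, ih]
  | conj C D ihC ihD => rintro (y | a) <;> simp [Valuation.interp, ihC, ihD]
  | disj C D ihC ihD => rintro (y | a) <;> simp [Valuation.interp, ihC, ihD]
  | all R C ih =>
      rintro (y | a)
      · constructor
        · intro h b hb
          exact (ih (Sum.inl b)).mp (h (Sum.inl b) hb)
        · rintro h (b | b) hb
          · exact (ih (Sum.inl b)).mpr (h b hb)
          · exact hb.elim
      · constructor
        · intro h b hb
          exact (ih (Sum.inr b)).mp (h (Sum.inr b) hb)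
        · rintro h (b | b) hb
          · exact hb.elim
          · exact (ih (Sum.inr b)).mpr (h b hb)
  | ex R C ih =>
      rintro (y | a)
      · constructor
        · rintro ⟨s, hs, hsC⟩
          rcases s with b | b
          · exact ⟨b, hs, (ih (Sum.inl b)).mp hsC⟩
          · exact hs.elim
        · rintro ⟨b, hb, hbC⟩
          exact ⟨Sum.inl b, hb, (ih (Sum.inl b)).mpr hbC⟩
      · constructor
        · rintro ⟨s, hs, hsC⟩
          rcases s with b | b
          · exact hs.elim
          · exact ⟨b, hs, (ih (Sum.inr b)).mp hsC⟩
        · rintro ⟨b, hb, hbC⟩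
          exact ⟨Sum.inr b, hb, (ih (Sum.inr b)).mpr hbC⟩

open Classical in
/-- Level function: the copy of `x` at the bottom, then `Δ2`, then the rest of `Δ1`. -/
noncomputable def Lv (x : Δ1) : Δ1 ⊕ Δ2 → ℕ :=
  Sum.elim (fun y => if y = x then 0 else 2) (fun _ => 1)

def innerR (ltM : Δ1 → Δ1 → Prop) (ltP : Δ2 → Δ2 → Prop) :
    Δ1 ⊕ Δ2 → Δ1 ⊕ Δ2 → Prop
  | .inl y, .inl z => ltM y z
  | .inr a, .inr b => ltP a b
  | _, _ => False

def combLt (M : Interp Δ1) (P : Interp Δ2) (x : Δ1) (s t : Δ1 ⊕ Δ2) : Prop :=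
  Lv x s < Lv x t ∨ (Lv x s = Lv x t ∧ innerR M.lt P.lt s t)

variable {M : Interp Δ1} {P : Interp Δ2} {x : Δ1}

lemma not_combLt_inl_x : ∀ u, ¬ combLt M P x u (Sum.inl x) := by
  rintro u (h | ⟨he, hi⟩)
  · simp [Lv] at h
  · rcases u with w | b
    · have hw : w = x := by
        by_contra hw; simp [Lv, hw] at he
      exact M.lt_irrefl x (hw ▸ hi)
    · exact hi.elim

lemma combLt_inl_x {t : Δ1 ⊕ Δ2} (h : t ≠ Sum.inl x) : combLt M P x (Sum.inl x) t := by
  rcases t with z | b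
  · have hz : z ≠ x := fun hz => h (by rw [hz])
    exact Or.inl (by simp [Lv, hz])
  · exact Or.inl (by simp [Lv])

lemma combLt_inr_inl {a : Δ2} {z : Δ1} (hz : z ≠ x) :
    combLt M P x (Sum.inr a) (Sum.inl z) :=
  Or.inl (by simp [Lv, hz])

lemma combLt_inl_inl {w z : Δ1} (hw : w ≠ x) (hz : z ≠ x) (h : M.lt w z) :
    combLt M P x (Sum.inl w) (Sum.inl z) :=
  Or.inr ⟨by simp [Lv, hw, hz], h⟩

lemma combLt_inr_inr {a b : Δ2} (h : P.lt a b) :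
    combLt M P x (Sum.inr a) (Sum.inr b) :=
  Or.inr ⟨rfl, h⟩

lemma combLt_inr_inr_inv {a b : Δ2} (h : combLt M P x (Sum.inr a) (Sum.inr b)) :
    P.lt a b := by
  rcases h with h | ⟨_, hi⟩
  · simp [Lv] at h
  · exact hi

lemma combLt_inl_inl_inv {w z : Δ1} (hw : w ≠ x) (h : combLt M P x (Sum.inl w) (Sum.inl z)) :
    M.lt w z := by
  rcases h with h | ⟨_, hi⟩
  · by_cases hz : z = x <;> simp [Lv, hw, hz] at h
  · exact hi

/-- The layered combination of two interpretations. -/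
def combine (M : Interp Δ1) (P : Interp Δ2) (x : Δ1) : Interp (Δ1 ⊕ Δ2) where
  lt := combLt M P x
  lt_irrefl := by
    rintro s (h | ⟨_, hi⟩)
    · exact lt_irrefl _ h
    · rcases s with y | a
      · exact M.lt_irrefl y hi
      · exact P.lt_irrefl a hi
  lt_trans := by
    rintro s t u (h1 | ⟨h1, h1'⟩) (h2 | ⟨h2, h2'⟩)
    · exact Or.inl (h1.trans h2)
    · exact Or.inl (lt_of_lt_of_eq h1 h2)
    · exact Or.inl (lt_of_eq_of_lt h1 h2)
    · refine Or.inr ⟨h1.trans h2, ?_⟩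
      rcases s with y | a <;> rcases t with z | b <;> try exact h1'.elim
      · rcases u with w | c
        · exact M.lt_trans h1' h2'
        · exact h2'.elim
      · rcases u with w | c
        · exact h2'.elim
        · exact P.lt_trans h1' h2'
  lt_modular := by
    intro s t u h
    rcases Nat.lt_trichotomy (Lv x s) (Lv x u) with hc | hc | hc
    · exact Or.inl (Or.inl hc)
    · rcases h with h | ⟨he, hi⟩
      · exact Or.inr (Or.inl (lt_of_eq_of_lt hc.symm h))
      · rcases s with y | a <;> rcases t with z | b <;> try exact hi.elim
        · rcases u with w | c
          · rcases M.lt_modular y z w hi with h' | h'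
            · exact Or.inl (Or.inr ⟨hc, h'⟩)
            · exact Or.inr (Or.inr ⟨hc.symm.trans he, h'⟩)
          · exfalso
            by_cases hy : y = x <;> simp [Lv, hy] at hc
        · rcases u with w | c
          · exfalso
            by_cases hw : w = x <;> simp [Lv, hw] at hc
          · rcases P.lt_modular a b c hi with h' | h'
            · exact Or.inl (Or.inr ⟨hc, h'⟩)
            · exact Or.inr (Or.inr ⟨hc.symm.trans he, h'⟩)
    · rcases h with h | ⟨he, _⟩
      · exact Or.inr (Or.inl (hc.trans h))
      · exact Or.inr (Or.inl (lt_of_lt_of_eq hc he))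
  lt_wf := by
    have acc0 : Acc (combLt M P x) (Sum.inl x) :=
      Acc.intro _ (fun u hu => (not_combLt_inl_x u hu).elim)
    have acc_inr : ∀ a, Acc (combLt M P x) (Sum.inr a) := by
      intro a
      induction a using P.lt_wf.induction with
      | _ a ih =>
        constructor
        rintro (w | b) h
        · rcases h with h | ⟨_, hi⟩
          · have hw : w = x := by
              by_contra hw; simp [Lv, hw] at h
            subst hw; exact acc0
          · exact hi.elim
        · exact ih b (combLt_inr_inr_inv h)
    have acc_inl : ∀ y, Acc (combLt M P x) (Sum.inl y) := by
      intro y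
      induction y using M.lt_wf.induction with
      | _ y ih =>
        constructor
        rintro (w | b) h
        · rcases h with h | ⟨_, hi⟩
          · have hw : w = x := by
              by_contra hw
              by_cases hy : y = x <;> simp [Lv, hw, hy] at h
            subst hw; exact acc0
          · exact ih w hi
        · exact acc_inr b
    constructor
    rintro (y | a)
    · exact acc_inl y
    · exact acc_inr a
  V := sumVal M.V P.V

end BPDLAux

namespace BPDLAux
open BPDL

lemma strictPart_subset_Eseq (T : Set Inclusion) : ∀ i, strictPart T ⊆ Eseq T i
  | 0 => fun _ hF => hF.1
  | _+1 => Set.subset_union_right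

lemma Eseq_succ_subset (T : Set Inclusion) (i : ℕ) : Eseq T (i+1) ⊆ Eseq T i := by
  rintro F (hF | hF)
  · exact hF.1
  · exact strictPart_subset_Eseq T i hF

lemma Eseq_anti (T : Set Inclusion) {j k : ℕ} (h : j ≤ k) : Eseq T k ⊆ Eseq T j := by
  induction k with
  | zero =>
      have : j = 0 := Nat.le_zero.mp h
      subst this; exact subset_rfl
  | succ k ih =>
      rcases Nat.lt_or_ge j (k+1) with h' | h'
      · exact (Eseq_succ_subset T k).trans (ih (Nat.lt_succ_iff.mp h'))
      · have : j = k+1 := le_antisymm h h'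
        subst this; exact subset_rfl

lemma typ_mem_Eseq (T : Set Inclusion) {C D : Concept} (hFT : Inclusion.typ C D ∈ T) :
    ∀ m, (∀ i, i < m → exceptional (Eseq T i) C) → Inclusion.typ C D ∈ Eseq T m
  | 0, _ => hFT
  | m+1, h =>
      Set.mem_union_left _
        ⟨typ_mem_Eseq T hFT m (fun i hi => h i (hi.trans (Nat.lt_succ_self m))),
          C, D, rfl, h m (Nat.lt_succ_self m)⟩

lemma entailsTopMat_mono {E S S' : Set Inclusion} {G : Concept} (hsub : S ⊆ S')
    (h : entailsTopMat E S G) : entailsTopMat E S' G :=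
  fun Δ M hM x hx hmat => h Δ M hM x hx (fun C D hCD => hmat C D (hsub hCD))

open Classical in
/-- The key semantic lemma: if `E_k` together with the typicality inclusion
`T(C) ⊑ D ∈ T` entails `T(⊤) ⊑ ¬B`, then already `E_k ⊨ T(⊤) ⊓ (¬C ⊔ D) ⊑ ¬B`. -/
lemma key (T : Set Inclusion) (B : Concept) (k : ℕ) (C D : Concept)
    (hFT : Inclusion.typ C D ∈ T)
    (hent : entails (Eseq T k ∪ {Inclusion.typ C D})
      (Inclusion.typ Concept.top (Concept.neg B))) :
    entailsTopMat (Eseq T k) {Inclusion.typ C D} (Concept.neg B) := by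
  intro Δ M hM x hx hmat
  have hmatx : x ∈ M.V.interp (Concept.disj (Concept.neg C) D) := hmat C D rfl
  by_cases hFk : Inclusion.typ C D ∈ Eseq T k
  · have hsat : ∀ G ∈ Eseq T k ∪ {Inclusion.typ C D}, M.satInc G := by
      rintro G (hG | hG)
      · exact hM G hG
      · rw [Set.mem_singleton_iff] at hG; subst hG; exact hM _ hFk
    exact hent Δ M hsat hx
  · have hex : ∃ i, ¬ exceptional (Eseq T i) C := by
      by_contra hcon
      push_neg at hcon
      exact hFk (typ_mem_Eseq T hFT k (fun i _ => hcon i))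
    have hj : ¬ exceptional (Eseq T (Nat.find hex)) C := Nat.find_spec hex
    have hFj : Inclusion.typ C D ∈ Eseq T (Nat.find hex) :=
      typ_mem_Eseq T hFT _ (fun i hi => not_not.mp (Nat.find_min hex hi))
    have hjk : Nat.find hex ≤ k := by
      by_contra hlt
      push_neg at hlt
      exact hFk (typ_mem_Eseq T hFT k
        (fun i hik => not_not.mp (Nat.find_min hex (hik.trans hlt))))
    rw [exceptional, entails] at hj
    push_neg at hj
    obtain ⟨ΔP, P, hP, hPnot⟩ := hj
    have hPnot' : ¬ (minSet P.lt (Set.univ : Set ΔP) ⊆ (P.V.interp C)ᶜ) := hPnot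
    obtain ⟨p, hpmin, hpC⟩ := Set.not_subset.mp hPnot'
    rw [Set.notMem_compl_iff] at hpC
    have hPk : ∀ G ∈ Eseq T k, P.satInc G := fun G hG => hP G (Eseq_anti T hjk hG)
    have hPF : P.satInc (Inclusion.typ C D) := hP _ hFj
    set MC := combine M P x with hMCdef
    have hint : ∀ (G : Concept) (s), s ∈ MC.V.interp G ↔
        Sum.elim (· ∈ M.V.interp G) (· ∈ P.V.interp G) s :=
      fun G s => sumVal_interp M.V P.V G s
    have typSat : ∀ C' D' : Concept,
        (x ∈ M.V.interp C' → x ∈ M.V.interp D') →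
        (minSet P.lt (P.V.interp C') ⊆ P.V.interp D') →
        ((∀ a, a ∉ P.V.interp C') → minSet M.lt (M.V.interp C') ⊆ M.V.interp D') →
        minSet MC.lt (MC.V.interp C') ⊆ MC.V.interp D' := by
      rintro C' D' h1 h2 h3 s ⟨hsC, hsmin⟩
      rcases s with y | a
      · have hyC : y ∈ M.V.interp C' := (hint C' _).mp hsC
        by_cases hyx : y = x
        · subst hyx
          exact (hint D' _).mpr (h1 hyC)
        · by_cases hxC : x ∈ M.V.interp C'
          · exact ((hsmin ⟨Sum.inl x, (hint C' _).mpr hxC,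
              combLt_inl_x (fun he => hyx (Sum.inl.inj he))⟩)).elim
          · by_cases hPC : ∃ a, a ∈ P.V.interp C'
            · obtain ⟨a, ha⟩ := hPC
              exact ((hsmin ⟨Sum.inr a, (hint C' _).mpr ha, combLt_inr_inl hyx⟩)).elim
            · push_neg at hPC
              refine (hint D' _).mpr (h3 hPC ⟨hyC, ?_⟩)
              rintro ⟨w, hw, hlt⟩
              have hwx : w ≠ x := fun he => hxC (he ▸ hw)
              exact hsmin ⟨Sum.inl w, (hint C' _).mpr hw, combLt_inl_inl hwx hyx hlt⟩
      · have haC : a ∈ P.V.interp C' := (hint C' _).mp hsC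
        refine (hint D' _).mpr (h2 ⟨haC, ?_⟩)
        rintro ⟨b, hb, hlt⟩
        exact hsmin ⟨Sum.inr b, (hint C' _).mpr hb, combLt_inr_inr hlt⟩
    have hsat : ∀ G ∈ Eseq T k ∪ {Inclusion.typ C D}, MC.satInc G := by
      rintro G (hG | hG)
      · rcases G with ⟨C', D'⟩ | ⟨C', D'⟩
        · rintro (y | a) hs
          · exact (hint D' _).mpr (hM _ hG ((hint C' _).mp hs))
          · exact (hint D' _).mpr (hPk _ hG ((hint C' _).mp hs))
        · exact typSat C' D'
            (fun hxC => hM _ hG ⟨hxC, fun ⟨w, _, hlt⟩ => hx.2 ⟨w, trivial, hlt⟩⟩)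
            (hPk _ hG)
            (fun _ => hM _ hG)
      · rw [Set.mem_singleton_iff] at hG; subst hG
        refine typSat C D ?_ hPF (fun hemp => (hemp p hpC).elim)
        intro hxC
        rcases hmatx with h | h
        · exact (h hxC).elim
        · exact h
    have hxmin : Sum.inl x ∈ minSet MC.lt (Set.univ : Set (Δ ⊕ ΔP)) :=
      ⟨trivial, fun ⟨u, _, hu⟩ => not_combLt_inl_x u hu⟩
    exact (hint (Concept.neg B) _).mp (hent _ MC hsat hxmin)

end BPDLAux

/-- Uniqueness of the maximal basis when S^B is globally compatible with B:
(i) every compatible S ⊆ δ(T) is contained in S^B, and (ii) S^B ∪ E_k is the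
unique maximal set of defeasible inclusions compatible with B w.r.t. ≺. -/
theorem unique_maximal_basis (T : Set Inclusion) (B : Concept) (k : ℕ)
    (hk : rankIs T B k)
    (hglob : ¬ entailsTopMat (Eseq T k) (SBset T B k) (Concept.neg B)) :
    (∀ S : Set Inclusion, S ⊆ deltaT T →
      ¬ entailsTopMat (Eseq T k) S (Concept.neg B) → S ⊆ SBset T B k) ∧
    maximalCompatible T k B (SBset T B k) ∧
    (∀ S : Set Inclusion, maximalCompatible T k B S →
      S ∪ Eseq T k = SBset T B k ∪ Eseq T k) := by
  classical
  have part1 : ∀ S : Set Inclusion, S ⊆ deltaT T →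
      ¬ entailsTopMat (Eseq T k) S (Concept.neg B) → S ⊆ SBset T B k := by
    intro S hSsub hScomp F hF
    obtain ⟨hFT, C, D, rfl⟩ := hSsub hF
    refine ⟨⟨hFT, C, D, rfl⟩, ?_⟩
    intro hent
    exact hScomp (BPDLAux.entailsTopMat_mono (Set.singleton_subset_iff.mpr hF)
      (BPDLAux.key T B k C D hFT hent))
  have part2 : maximalCompatible T k B (SBset T B k) := by
    refine ⟨fun F hF => hF.1, hglob, ?_⟩
    intro S' hS'sub hprec
    by_contra hS'comp
    have hsub : S' ⊆ SBset T B k := part1 S' hS'sub hS'comp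
    obtain ⟨h, hss, -⟩ := hprec
    exact hss.not_subset (Set.inter_subset_inter_left _ hsub)
  refine ⟨part1, part2, ?_⟩
  intro S hS
  obtain ⟨hSsub, hScomp, hSmax⟩ := hS
  have hSsb : S ⊆ SBset T B k := part1 S hSsub hScomp
  have hrev : SBset T B k ⊆ S ∪ Eseq T k := by
    intro F hF
    by_cases hFS : F ∈ S
    · exact Or.inl hFS
    have hF' := hF
    obtain ⟨⟨hFT, C, D, rfl⟩, -⟩ := hF'
    by_cases hrank : ∃ i, ¬ exceptional (Eseq T i) C
    · exfalso
      have hrk : rankIs T C (Nat.find hrank) :=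
        ⟨Nat.find_spec hrank, fun i hi => not_not.mp (Nat.find_min hrank hi)⟩
      have hFD : Inclusion.typ C D ∈ Drank T (Nat.find hrank) := ⟨C, D, rfl, hFT, hrk⟩
      have hprec : serPrec T (insert (Inclusion.typ C D) S) S := by
        refine ⟨Nat.find hrank, ?_, ?_⟩
        · rw [Set.ssubset_def]
          constructor
          · exact Set.inter_subset_inter_left _ (Set.subset_insert _ _)
          · intro hcon
            exact hFS (hcon ⟨Set.mem_insert _ _, hFD⟩).1
        · intro jj hjj
          apply Set.eq_of_subset_of_subset
          · rintro G ⟨hG1, hG2⟩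
            rcases Set.mem_insert_iff.mp hG1 with rfl | hGS
            · exfalso
              obtain ⟨C', D', hEq, -, hrk'⟩ := hG2
              obtain ⟨rfl, rfl⟩ : C = C' ∧ D = D' := by
                injection hEq with h1 h2; exact ⟨h1, h2⟩
              exact hrk.1 (hrk'.2 _ hjj)
            · exact ⟨hGS, hG2⟩
          · exact Set.inter_subset_inter_left _ (Set.subset_insert _ _)
      have hins : insert (Inclusion.typ C D) S ⊆ deltaT T :=
        Set.insert_subset_iff.mpr ⟨⟨hFT, C, D, rfl⟩, hSsub⟩
      have hmax := hSmax _ hins hprec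
      have hup : insert (Inclusion.typ C D) S ⊆ SBset T B k :=
        Set.insert_subset_iff.mpr ⟨hF, hSsb⟩
      exact hglob (BPDLAux.entailsTopMat_mono hup hmax)
    · push_neg at hrank
      exact Or.inr (BPDLAux.typ_mem_Eseq T hFT k (fun i _ => hrank i))
  apply Set.eq_of_subset_of_subset
  · exact Set.union_subset (hSsb.trans Set.subset_union_left) Set.subset_union_right
  · exact Set.union_subset hrev Set.subset_union_right


end BPDL
end

section
/- Ranked representation of modular orders: let < be an irreflexive, transitive, modular (x < y implies x < z or z < y for all z) and well-founded binary relation on a finite set Δ, and define k(x) as the length of the longest <-descending chain x_0 < x_1 < … < x ending at x (so k(x) = 0 exactly for the <-minimal elements). Then for all x, y ∈ Δ: x < y if and only if k(x) < k(y). -/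
namespace BPDL

lemma chain_trans {Δ : Type} {lt : Δ → Δ → Prop}
    (htrans : ∀ {x y z}, lt x y → lt y z → lt x z)
    {f : ℕ → Δ} {n : ℕ} (hf : ∀ i < n, lt (f i) (f (i+1))) :
    ∀ j, j ≤ n → ∀ i, i < j → lt (f i) (f j) := by
  intro j
  induction j with
  | zero => omega
  | succ j ih =>
    intro hjn i hij
    rcases Nat.lt_succ_iff_lt_or_eq.mp hij with h | h
    · exact htrans (ih (by omega) i h) (hf j (by omega))
    · subst h; exact hf i (by omega)

lemma chainTo_bound {Δ : Type} [Finite Δ] {lt : Δ → Δ → Prop}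
    (hirr : ∀ x, ¬ lt x x)
    (htrans : ∀ {x y z}, lt x y → lt y z → lt x z)
    {x : Δ} {n : ℕ} (h : chainTo lt x n) : n < Nat.card Δ := by
  obtain ⟨f, hfx, hf⟩ := h
  have hinj : Function.Injective (fun i : Fin (n+1) => f i) := by
    intro i j hij
    have hi := i.isLt; have hj := j.isLt
    simp only at hij
    rcases lt_trichotomy (i : ℕ) (j : ℕ) with h | h | h
    · have hc := @chain_trans Δ lt @htrans f n hf j (by omega) i h
      rw [hij] at hc; exact absurd hc (hirr _)
    · exact Fin.ext h
    · have hc := @chain_trans Δ lt @htrans f n hf i (by omega) j h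
      rw [← hij] at hc; exact absurd hc (hirr _)
  have := Nat.card_le_card_of_injective _ hinj
  simpa using this

lemma chainTo_bddAbove {Δ : Type} [Finite Δ] {lt : Δ → Δ → Prop}
    (hirr : ∀ x, ¬ lt x x)
    (htrans : ∀ {x y z}, lt x y → lt y z → lt x z) (x : Δ) :
    BddAbove {n | chainTo lt x n} :=
  ⟨Nat.card Δ, fun _ hn => (chainTo_bound hirr htrans hn).le⟩

lemma chainTo_zero {Δ : Type} (lt : Δ → Δ → Prop) (x : Δ) : chainTo lt x 0 :=
  ⟨fun _ => x, rfl, by omega⟩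

lemma height_mem {Δ : Type} [Finite Δ] {lt : Δ → Δ → Prop}
    (hirr : ∀ x, ¬ lt x x)
    (htrans : ∀ {x y z}, lt x y → lt y z → lt x z) (x : Δ) :
    chainTo lt x (height lt x) :=
  Nat.sSup_mem ⟨0, by exact chainTo_zero lt x⟩ (chainTo_bddAbove hirr htrans x)

/-- Ranked representation of modular orders: on a finite set, an irreflexive,
transitive, modular and well-founded relation satisfies
x < y iff k(x) < k(y), where k is the longest-descending-chain length. -/
theorem modular_ranked_representation {Δ : Type} [Finite Δ]
    (lt : Δ → Δ → Prop)
    (hirr : ∀ x, ¬ lt x x)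
    (htrans : ∀ {x y z}, lt x y → lt y z → lt x z)
    (hmod : ∀ x y z, lt x y → lt x z ∨ lt z y)
    (hwf : WellFounded lt) :
    ∀ x y : Δ, lt x y ↔ height lt x < height lt y := by
  intro x y
  constructor
  · intro hxy
    obtain ⟨f, hfx, hf⟩ := height_mem hirr @htrans x
    set m := height lt x with hm
    have hchain : chainTo lt y (m + 1) := by
      refine ⟨fun i => if i = m + 1 then y else f i, by simp, ?_⟩
      intro i hi
      rcases Nat.lt_succ_iff_lt_or_eq.mp hi with h | h
      · simp only [if_neg (by omega : i ≠ m + 1), if_neg (by omega : i + 1 ≠ m + 1)]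
        exact hf i h
      · subst h
        simp only [if_neg (by omega : m ≠ m + 1), if_pos rfl, hfx]
        exact hxy
    have : m + 1 ≤ height lt y :=
      le_csSup (chainTo_bddAbove hirr @htrans y) hchain
    omega
  · intro hlt
    by_contra hxy
    obtain ⟨f, hfy, hf⟩ := height_mem hirr @htrans y
    set n := height lt y with hn
    rcases Nat.eq_zero_or_pos n with h0 | hpos
    · omega
    have hchain : chainTo lt x n := by
      refine ⟨fun i => if i = n then x else f i, by simp, ?_⟩
      intro i hi
      rcases Nat.lt_succ_iff_lt_or_eq.mp (Nat.lt_succ_of_lt hi) with h | h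
      · by_cases hin : i + 1 = n
        · simp only [if_neg (by omega : i ≠ n), if_pos hin]
          have hfi : lt (f i) y := hfy ▸ chain_trans @htrans hf n le_rfl i hi
          rcases hmod (f i) y x hfi with h' | h'
          · exact h'
          · exact absurd h' hxy
        · simp only [if_neg (by omega : i ≠ n), if_neg hin]
          exact hf i (by omega)
      · omega
    have : n ≤ height lt x :=
      le_csSup (chainTo_bddAbove hirr @htrans x) hchain
    omega

end BPDL
end
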